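/- arXiv:2511.12802 — 2 statements merged into one kernel-verified Lean document; each statement's English description precedes it below -/
import Mathlib

section
/- Let A be an m×n real matrix of rank r with thin SVD A = UΣVᵀ, and let Φ be an s×m matrix such that (1−ε)‖x‖ ≤ ‖ΦUx‖ ≤ (1+ε)‖x‖ for all x ∈ ℝʳ. Then for every i ∈ {1,…,r}, the i-th singular value of ΦA satisfies (1−ε)·σᵢ(A) ≤ σᵢ(ΦA) ≤ (1+ε)·σᵢ(A). -/
open Matrix

noncomputable def sval {m n : ℕ} (M : Matrix (Fin m) (Fin n) ℝ) (i : Fin n) : ℝ :=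
  let f : Fin n → ℝ :=
    fun j => Real.sqrt ((Matrix.isHermitian_conjTranspose_mul_self M).eigenvalues j)
  (f ∘ Tuple.sort f) i.rev

noncomputable def specNorm {m n : ℕ} (M : Matrix (Fin m) (Fin n) ℝ) : ℝ :=
  ‖(Matrix.toEuclideanLin M).toContinuousLinearMap‖

/-!
Write `A = U * (Σ Vᵀ)`. As `U` has orthonormal columns, `‖A x‖ = ‖Σ Vᵀ x‖`, while
`Φ A x = (Φ U) (Σ Vᵀ x)`, so the embedding hypothesis gives
`(1 - ε) ‖A x‖ ≤ ‖Φ A x‖ ≤ (1 + ε) ‖A x‖` for every `x`. Such a pointwise comparison of norms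
passes to every singular value by the Courant–Fischer argument: if `c ‖T x‖ ≤ ‖S x‖` for all `x`,
the span of the first `i + 1` eigenvectors of `T†T` meets the span of the last `n - i`
eigenvectors of `S†S` in some `x ≠ 0`, and there
`c² σᵢ(T)² ‖x‖² ≤ c² ‖T x‖² ≤ ‖S x‖² ≤ σᵢ(S)² ‖x‖²`.
-/

open Module InnerProductSpace
open scoped InnerProductSpace

theorem Tuple.comp_perm_comp_sort_eq_comp_revPerm {n : ℕ} {α : Type*} [LinearOrder α]
    {f : Fin n → α} (hf : Antitone f) (σ : Equiv.Perm (Fin n)) :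
    (f ∘ σ) ∘ Tuple.sort (f ∘ σ) = f ∘ Fin.revPerm := by
  rw [Tuple.comp_perm_comp_sort_eq_comp_sort, eq_comm, Tuple.comp_sort_eq_comp_iff_monotone]
  exact hf.comp fun _ _ ↦ Fin.rev_le_rev.2

namespace OrthonormalBasis

variable {𝕜 : Type*} [RCLike 𝕜] {E : Type*} [NormedAddCommGroup E] [InnerProductSpace 𝕜 E]
  {ι : Type*} [Fintype ι] (b : OrthonormalBasis ι 𝕜 E) (s : Finset ι)

theorem inner_eq_zero_of_mem_span {x : E}
    (hx : x ∈ Submodule.span 𝕜 (Set.range fun j : s ↦ b j)) {j : ι} (hj : j ∉ s) :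
    ⟪b j, x⟫_𝕜 = 0 := by
  refine (Submodule.span_le (p := LinearMap.ker (innerₛₗ 𝕜 (b j))).2 ?_ hx : _)
  rintro _ ⟨k, rfl⟩
  exact b.orthonormal.2 (ne_of_mem_of_not_mem k.2 hj).symm

theorem finrank_span_range_subtype :
    finrank 𝕜 (Submodule.span 𝕜 (Set.range fun j : s ↦ b j)) = s.card :=
  (finrank_span_eq_card (b.orthonormal.linearIndependent.comp _ Subtype.val_injective)).trans
    (Fintype.card_coe s)

end OrthonormalBasis

namespace LinearMap.IsSymmetric

variable {𝕜 : Type*} [RCLike 𝕜] {E : Type*} [NormedAddCommGroup E] [InnerProductSpace 𝕜 E]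
  [FiniteDimensional 𝕜 E] {P Q : E →ₗ[𝕜] E} {n : ℕ}

theorem re_inner_apply_eq_sum (hP : P.IsSymmetric) (hn : finrank 𝕜 E = n) (x : E) :
    RCLike.re ⟪x, P x⟫_𝕜 = ∑ j, hP.eigenvalues hn j * ‖⟪hP.eigenvectorBasis hn j, x⟫_𝕜‖ ^ 2 := by
  rw [← (hP.eigenvectorBasis hn).sum_inner_mul_inner x (P x), map_sum]
  congr 1 with j
  rw [← hP, apply_eigenvectorBasis, inner_smul_left, RCLike.conj_ofReal, ← inner_conj_symm x,
    mul_left_comm, RCLike.re_ofReal_mul, RCLike.conj_mul, ← RCLike.ofReal_pow, RCLike.ofReal_re]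

theorem eigenvalues_mul_norm_sq_le_re_inner (hP : P.IsSymmetric) (hn : finrank 𝕜 E = n)
    (i : Fin n) {x : E}
    (hx : x ∈ Submodule.span 𝕜 (Set.range fun j : Finset.Iic i ↦ hP.eigenvectorBasis hn j)) :
    hP.eigenvalues hn i * ‖x‖ ^ 2 ≤ RCLike.re ⟪x, P x⟫_𝕜 := by
  rw [re_inner_apply_eq_sum, ← (hP.eigenvectorBasis hn).sum_sq_norm_inner_right, Finset.mul_sum]
  refine Finset.sum_le_sum fun j _ ↦ ?_
  by_cases hj : j ∈ Finset.Iic i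
  · exact mul_le_mul_of_nonneg_right (hP.eigenvalues_antitone hn (Finset.mem_Iic.1 hj))
      (sq_nonneg _)
  · simp [OrthonormalBasis.inner_eq_zero_of_mem_span _ _ hx hj]

theorem re_inner_le_eigenvalues_mul_norm_sq (hP : P.IsSymmetric) (hn : finrank 𝕜 E = n)
    (i : Fin n) {x : E}
    (hx : x ∈ Submodule.span 𝕜 (Set.range fun j : Finset.Ici i ↦ hP.eigenvectorBasis hn j)) :
    RCLike.re ⟪x, P x⟫_𝕜 ≤ hP.eigenvalues hn i * ‖x‖ ^ 2 := by
  rw [re_inner_apply_eq_sum, ← (hP.eigenvectorBasis hn).sum_sq_norm_inner_right, Finset.mul_sum]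
  refine Finset.sum_le_sum fun j _ ↦ ?_
  by_cases hj : j ∈ Finset.Ici i
  · exact mul_le_mul_of_nonneg_right (hP.eigenvalues_antitone hn (Finset.mem_Ici.1 hj))
      (sq_nonneg _)
  · simp [OrthonormalBasis.inner_eq_zero_of_mem_span _ _ hx hj]

theorem mul_eigenvalues_le_of_forall_mul_re_inner_le (hP : P.IsSymmetric) (hQ : Q.IsSymmetric)
    (hn : finrank 𝕜 E = n) {c : ℝ} (hc : 0 ≤ c)
    (h : ∀ x, c * RCLike.re ⟪x, P x⟫_𝕜 ≤ RCLike.re ⟪x, Q x⟫_𝕜) (i : Fin n) :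
    c * hP.eigenvalues hn i ≤ hQ.eigenvalues hn i := by
  set V := Submodule.span 𝕜 (Set.range fun j : Finset.Iic i ↦ hP.eigenvectorBasis hn j)
  set W := Submodule.span 𝕜 (Set.range fun j : Finset.Ici i ↦ hQ.eigenvectorBasis hn j)
  -- `dim V + dim W = (i + 1) + (n - i) > dim E`, so `V` and `W` meet nontrivially.
  obtain ⟨x, hxV, hxW, hx⟩ : ∃ x ∈ V, x ∈ W ∧ x ≠ 0 := by
    by_contra! hVW
    have := Submodule.finrank_add_finrank_le_of_disjoint (Submodule.disjoint_def.2 hVW)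
    rw [OrthonormalBasis.finrank_span_range_subtype, OrthonormalBasis.finrank_span_range_subtype,
      Fin.card_Iic, Fin.card_Ici, hn] at this
    omega
  have hx2 : 0 < ‖x‖ ^ 2 := by positivity
  refine le_of_mul_le_mul_right ?_ hx2
  calc c * hP.eigenvalues hn i * ‖x‖ ^ 2
      = c * (hP.eigenvalues hn i * ‖x‖ ^ 2) := mul_assoc ..
    _ ≤ c * RCLike.re ⟪x, P x⟫_𝕜 :=
      mul_le_mul_of_nonneg_left (hP.eigenvalues_mul_norm_sq_le_re_inner hn i hxV) hc
    _ ≤ RCLike.re ⟪x, Q x⟫_𝕜 := h x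
    _ ≤ hQ.eigenvalues hn i * ‖x‖ ^ 2 := hQ.re_inner_le_eigenvalues_mul_norm_sq hn i hxW

end LinearMap.IsSymmetric

namespace LinearMap

variable {𝕜 : Type*} [RCLike 𝕜]
  {E : Type*} [NormedAddCommGroup E] [InnerProductSpace 𝕜 E] [FiniteDimensional 𝕜 E]
  {F : Type*} [NormedAddCommGroup F] [InnerProductSpace 𝕜 F] [FiniteDimensional 𝕜 F]
  {G : Type*} [NormedAddCommGroup G] [InnerProductSpace 𝕜 G] [FiniteDimensional 𝕜 G]

theorem re_inner_adjoint_comp_self_apply (T : E →ₗ[𝕜] F) (x : E) :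
    RCLike.re ⟪x, (adjoint T ∘ₗ T) x⟫_𝕜 = ‖T x‖ ^ 2 := by
  rw [comp_apply, adjoint_inner_right, inner_self_eq_norm_sq]

theorem mul_singularValues_le_of_forall_mul_norm_le (T : E →ₗ[𝕜] F) (S : E →ₗ[𝕜] G) {c : ℝ}
    (hc : 0 ≤ c) (h : ∀ x, c * ‖T x‖ ≤ ‖S x‖) (i : ℕ) :
    c * T.singularValues i ≤ S.singularValues i := by
  by_cases hi : i < finrank 𝕜 E
  swap
  · simpa [T.singularValues_of_finrank_le (not_lt.1 hi)] using S.singularValues_nonneg i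
  rw [← pow_le_pow_iff_left₀ (mul_nonneg hc (T.singularValues_nonneg i))
    (S.singularValues_nonneg i) two_ne_zero, mul_pow, T.sq_singularValues_of_lt rfl hi,
    S.sq_singularValues_of_lt rfl hi]
  refine T.isSymmetric_adjoint_comp_self.mul_eigenvalues_le_of_forall_mul_re_inner_le
    S.isSymmetric_adjoint_comp_self rfl (sq_nonneg c) (fun x ↦ ?_) _
  rw [re_inner_adjoint_comp_self_apply, re_inner_adjoint_comp_self_apply, ← mul_pow]
  exact pow_le_pow_left₀ (by positivity) (h x) 2

end LinearMap

namespace Matrix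

variable {𝕜 : Type*} [RCLike 𝕜] {l m n : Type*} [Fintype m] [Fintype n] [DecidableEq n]

theorem toEuclideanLin_mul_apply [Fintype l] [DecidableEq l] [DecidableEq m]
    (M : Matrix l m 𝕜) (N : Matrix m n 𝕜) (x : EuclideanSpace 𝕜 n) :
    toEuclideanLin (M * N) x = toEuclideanLin M (toEuclideanLin N x) := by
  rw [toLpLin_mul_same, LinearMap.comp_apply]

theorem norm_toEuclideanLin_apply_of_conjTranspose_mul_self_eq_one [DecidableEq m]
    {U : Matrix m n 𝕜} (hU : Uᴴ * U = 1) (x : EuclideanSpace 𝕜 n) :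
    ‖toEuclideanLin U x‖ = ‖x‖ := by
  have := (toEuclideanLin U).re_inner_adjoint_comp_self_apply x
  rw [← toEuclideanLin_conjTranspose_eq_adjoint, ← toLpLin_mul_same, hU, toLpLin_one,
    LinearMap.id_apply, inner_self_eq_norm_sq] at this
  exact ((pow_left_inj₀ (norm_nonneg _) (norm_nonneg _) two_ne_zero).1 this).symm

end Matrix

-- `IsHermitian.eigenvalues` is the antitone `eigenvalues₀` composed with a permutation, which
-- sorting undoes.
theorem sval_eq_sqrt_eigenvalues₀ {m n : ℕ} (M : Matrix (Fin m) (Fin n) ℝ) (i : Fin n) :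
    sval M i = √((isHermitian_conjTranspose_mul_self M).eigenvalues₀
      (i.cast (Fintype.card_fin n).symm)) := by
  set hM := isHermitian_conjTranspose_mul_self M
  set f : Fin n → ℝ := fun j ↦ √(hM.eigenvalues₀ (j.cast (Fintype.card_fin n).symm))
  have hf : Antitone f := fun _ _ h ↦ Real.sqrt_le_sqrt (hM.eigenvalues₀_antitone h)
  set σ : Equiv.Perm (Fin n) :=
    (Fintype.equivOfCardEq (Fintype.card_fin _)).symm.trans (finCongr (Fintype.card_fin n))
  have hfσ : f ∘ σ = fun j ↦ √(hM.eigenvalues j) := by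
    ext j
    simp [f, σ, IsHermitian.eigenvalues]
  have := Tuple.comp_perm_comp_sort_eq_comp_revPerm hf σ
  rw [hfσ] at this
  exact (congrFun this i.rev).trans (by simp [f])

theorem sval_eq_singularValues {m n : ℕ} (M : Matrix (Fin m) (Fin n) ℝ) (i : Fin n) :
    sval M i = (toEuclideanLin M).singularValues i := by
  rw [sval_eq_sqrt_eigenvalues₀,
    (toEuclideanLin M).singularValues_of_lt finrank_euclideanSpace (by simp)]
  have h : toEuclideanLin (Mᴴ * M) = LinearMap.adjoint (toEuclideanLin M) ∘ₗ toEuclideanLin M := by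
    rw [toLpLin_mul_same, toEuclideanLin_conjTranspose_eq_adjoint]
  simp only [IsHermitian.eigenvalues₀, h]
  rfl

theorem stmt0_general (m n s r : ℕ) (ε : ℝ) (hε0 : 0 < ε) (hε1 : ε < 1)
    (A : Matrix (Fin m) (Fin n) ℝ)
    (U : Matrix (Fin m) (Fin r) ℝ) (V : Matrix (Fin n) (Fin r) ℝ) (σ : Fin r → ℝ)
    (hU : Uᵀ * U = 1)
    (hSVD : A = U * Matrix.diagonal σ * Vᵀ)
    (Φ : Matrix (Fin s) (Fin m) ℝ)
    (hemb : ∀ x : EuclideanSpace ℝ (Fin r),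
      (1 - ε) * ‖x‖ ≤ ‖Matrix.toEuclideanLin (Φ * U) x‖ ∧
      ‖Matrix.toEuclideanLin (Φ * U) x‖ ≤ (1 + ε) * ‖x‖) :
    ∀ i : Fin n, (i : ℕ) < r →
      (1 - ε) * sval A i ≤ sval (Φ * A) i ∧ sval (Φ * A) i ≤ (1 + ε) * sval A i := by
  intro i _
  have hA : ∀ x, ‖toEuclideanLin A x‖ = ‖toEuclideanLin (diagonal σ * Vᵀ) x‖ := fun x ↦ by
    rw [hSVD, Matrix.mul_assoc, toEuclideanLin_mul_apply,
      norm_toEuclideanLin_apply_of_conjTranspose_mul_self_eq_one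
        (by rwa [conjTranspose_eq_transpose_of_trivial])]
  have hΦA : ∀ x, toEuclideanLin (Φ * A) x
      = toEuclideanLin (Φ * U) (toEuclideanLin (diagonal σ * Vᵀ) x) := fun x ↦ by
    rw [hSVD, Matrix.mul_assoc U, ← Matrix.mul_assoc Φ U, toEuclideanLin_mul_apply (Φ * U)]
  rw [sval_eq_singularValues, sval_eq_singularValues]
  constructor
  · refine LinearMap.mul_singularValues_le_of_forall_mul_norm_le _ _ (by linarith) (fun x ↦ ?_) i
    rw [hA, hΦA]
    exact (hemb _).1
  · have hε : (0 : ℝ) < 1 + ε := by linarith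
    rw [← inv_mul_le_iff₀ hε]
    refine LinearMap.mul_singularValues_le_of_forall_mul_norm_le _ _ (by positivity) (fun x ↦ ?_) i
    rw [inv_mul_le_iff₀ hε, hA, hΦA]
    exact (hemb _).2

theorem stmt0 (m n s r : ℕ) (hrn : r ≤ n) (ε : ℝ) (hε0 : 0 < ε) (hε1 : ε < 1)
    (A : Matrix (Fin m) (Fin n) ℝ) (hrank : A.rank = r)
    (U : Matrix (Fin m) (Fin r) ℝ) (V : Matrix (Fin n) (Fin r) ℝ) (σ : Fin r → ℝ)
    (hU : Uᵀ * U = 1) (hV : Vᵀ * V = 1)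
    (hσpos : ∀ i, 0 < σ i) (hσmono : ∀ i j : Fin r, i ≤ j → σ j ≤ σ i)
    (hSVD : A = U * Matrix.diagonal σ * Vᵀ)
    (Φ : Matrix (Fin s) (Fin m) ℝ)
    (hemb : ∀ x : EuclideanSpace ℝ (Fin r),
      (1 - ε) * ‖x‖ ≤ ‖Matrix.toEuclideanLin (Φ * U) x‖ ∧
      ‖Matrix.toEuclideanLin (Φ * U) x‖ ≤ (1 + ε) * ‖x‖) :
    ∀ i : Fin n, (i : ℕ) < r →
      (1 - ε) * sval A i ≤ sval (Φ * A) i ∧ sval (Φ * A) i ≤ (1 + ε) * sval A i :=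
  stmt0_general m n s r ε hε0 hε1 A U V σ hU hSVD Φ hemb
end

section
/- Under the hypotheses of the balancing construction with κ(A) ≤ κ₀ and subspace-embedding parameter ε ∈ (0,1/4), the balancing operator W satisfies ‖W‖₂ ≤ ((1+ε)/(1−ε))·κ₀. -/
open Matrix

/-!
On the column space of `Ũ` the operator `W` acts as `Λ`, and on its orthogonal complement
as the identity, so `‖W‖ ≤ max (1, maxᵢ g̃ / σ̃ᵢ) ≤ max (1, σ̃₁ / σ̃_r)` as `g̃ ≤ σ̃₁`. Each `σ̃ᵢ` equals
`‖ΦU Σ w‖` for the vector `w = Vᵀ Ṽ eᵢ`, which is a unit vector because `Ṽ = Bᵀ Ũ Σ̃⁻¹` lies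
in the column space of `V`. The embedding property of `ΦU` therefore gives
`σ̃₁ ≤ (1 + ε) σ₁` and `(1 - ε) σ_r ≤ σ̃_r`.
-/

open RealInnerProductSpace

section EuclideanNorm

variable {ι κ : Type*} [Fintype ι] [DecidableEq ι] [Fintype κ] [DecidableEq κ]

theorem Matrix.inner_toEuclideanLin_left (M : Matrix ι κ ℝ) (x : EuclideanSpace ℝ κ)
    (y : EuclideanSpace ℝ ι) : ⟪toEuclideanLin M x, y⟫ = ⟪x, toEuclideanLin Mᵀ y⟫ := by
  rw [← conjTranspose_eq_transpose_of_trivial, toEuclideanLin_conjTranspose_eq_adjoint,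
    LinearMap.adjoint_inner_right]

theorem Matrix.norm_toEuclideanLin_of_transpose_mul_self {M : Matrix ι κ ℝ} (hM : Mᵀ * M = 1)
    (x : EuclideanSpace ℝ κ) : ‖toEuclideanLin M x‖ = ‖x‖ := by
  have h : ‖toEuclideanLin M x‖ ^ 2 = ‖x‖ ^ 2 := by
    rw [← real_inner_self_eq_norm_sq, ← real_inner_self_eq_norm_sq, inner_toEuclideanLin_left,
      ← LinearMap.comp_apply, ← toLpLin_mul_same, hM, toLpLin_one, LinearMap.id_apply]
  exact (sq_eq_sq₀ (norm_nonneg _) (norm_nonneg _)).mp h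

theorem Matrix.norm_sq_toEuclideanLin_diagonal (d : ι → ℝ) (x : EuclideanSpace ℝ ι) :
    ‖toEuclideanLin (diagonal d) x‖ ^ 2 = ∑ i, d i ^ 2 * x i ^ 2 := by
  simp [EuclideanSpace.real_norm_sq_eq, toLpLin_apply, mulVec_diagonal, mul_pow]

theorem Matrix.norm_toEuclideanLin_diagonal_le {d : ι → ℝ} {c : ℝ} (hc : 0 ≤ c)
    (hd : ∀ i, |d i| ≤ c) (x : EuclideanSpace ℝ ι) :
    ‖toEuclideanLin (diagonal d) x‖ ≤ c * ‖x‖ := by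
  refine (sq_le_sq₀ (norm_nonneg _) (by positivity)).mp ?_
  rw [norm_sq_toEuclideanLin_diagonal, mul_pow, EuclideanSpace.real_norm_sq_eq, Finset.mul_sum]
  refine Finset.sum_le_sum fun i _ => mul_le_mul_of_nonneg_right ?_ (sq_nonneg _)
  exact sq_le_sq' (abs_le.mp (hd i)).1 (abs_le.mp (hd i)).2

theorem Matrix.le_norm_toEuclideanLin_diagonal {d : ι → ℝ} {c : ℝ} (hc : 0 ≤ c)
    (hd : ∀ i, c ≤ |d i|) (x : EuclideanSpace ℝ ι) :
    c * ‖x‖ ≤ ‖toEuclideanLin (diagonal d) x‖ := by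
  refine (sq_le_sq₀ (by positivity) (norm_nonneg _)).mp ?_
  rw [norm_sq_toEuclideanLin_diagonal, mul_pow, EuclideanSpace.real_norm_sq_eq, Finset.mul_sum]
  refine Finset.sum_le_sum fun i _ => mul_le_mul_of_nonneg_right ?_ (sq_nonneg _)
  rw [← sq_abs (d i)]
  exact pow_le_pow_left₀ hc (hd i) 2

theorem Matrix.norm_toEuclideanLin_diagonal_single (d : ι → ℝ) (i : ι) :
    ‖toEuclideanLin (diagonal d) (EuclideanSpace.single i 1)‖ = |d i| := by
  simp [EuclideanSpace.single, toLpLin_apply]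

end EuclideanNorm

section SVD

variable {α β ρ τ : Type*} [Fintype α] [Fintype ρ] [DecidableEq ρ] [Fintype τ] [DecidableEq τ]

theorem Matrix.eq_mul_of_mul_diagonal_mul_transpose_eq {K : Type*} [Field K]
    {P : Matrix α ρ K} {σ : ρ → K} {V : Matrix β ρ K}
    {Ut : Matrix α τ K} {σt : τ → K} {Vt : Matrix β τ K}
    (hUt : Utᵀ * Ut = 1) (hσt : ∀ i, σt i ≠ 0)
    (h : P * diagonal σ * Vᵀ = Ut * diagonal σt * Vtᵀ) :
    Vt = V * (diagonal σ * Pᵀ * Ut * diagonal σt⁻¹) := by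
  have hσtσt : diagonal σt * diagonal σt⁻¹ = 1 := by
    rw [diagonal_mul_diagonal, ← diagonal_one]
    exact congrArg diagonal (funext fun i => mul_inv_cancel₀ (hσt i))
  have h' := congrArg (fun M => Mᵀ * Ut * diagonal σt⁻¹) h
  simp only [transpose_mul, transpose_transpose, diagonal_transpose, Matrix.mul_assoc] at h'
  rw [← Matrix.mul_assoc Utᵀ, hUt, Matrix.one_mul, hσtσt, Matrix.mul_one] at h'
  rw [← h']
  simp only [Matrix.mul_assoc]

variable [DecidableEq α] [Fintype β] [DecidableEq β]
  {P : Matrix α ρ ℝ} {σ : ρ → ℝ} {V : Matrix β ρ ℝ} {Ut : Matrix α τ ℝ} {σt : τ → ℝ} {Vt : Matrix β τ ℝ}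

theorem Matrix.exists_norm_eq_abs_of_mul_diagonal_mul_transpose_eq
    (hV : Vᵀ * V = 1) (hUt : Utᵀ * Ut = 1) (hVt : Vtᵀ * Vt = 1) (hσt : ∀ i, σt i ≠ 0)
    (h : P * diagonal σ * Vᵀ = Ut * diagonal σt * Vtᵀ) (i : τ) :
    ∃ w : EuclideanSpace ℝ ρ, ‖w‖ = 1 ∧
      ‖toEuclideanLin (P * diagonal σ) w‖ = |σt i| := by
  set C := diagonal σ * Pᵀ * Ut * diagonal σt⁻¹
  have hVtC : Vt = V * C := eq_mul_of_mul_diagonal_mul_transpose_eq hUt hσt h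
  have hC : P * diagonal σ * C = Ut * diagonal σt := by
    calc P * diagonal σ * C = P * diagonal σ * Vᵀ * Vt := by
          rw [hVtC, Matrix.mul_assoc _ Vᵀ, ← Matrix.mul_assoc Vᵀ, hV, Matrix.one_mul]
      _ = Ut * diagonal σt := by rw [h, Matrix.mul_assoc _ Vtᵀ, hVt, Matrix.mul_one]
  refine ⟨toEuclideanLin C (EuclideanSpace.single i 1), ?_, ?_⟩
  · rw [← norm_toEuclideanLin_of_transpose_mul_self hV, ← LinearMap.comp_apply,
      ← toLpLin_mul_same, ← hVtC, norm_toEuclideanLin_of_transpose_mul_self hVt]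
    simp
  · rw [← LinearMap.comp_apply, ← toLpLin_mul_same, hC, toLpLin_mul_same, LinearMap.comp_apply,
      norm_toEuclideanLin_of_transpose_mul_self hUt, norm_toEuclideanLin_diagonal_single]

theorem Matrix.abs_le_of_mul_diagonal_mul_transpose_eq {a M : ℝ} (ha : 0 ≤ a) (hM : 0 ≤ M)
    (hP : ∀ x, ‖toEuclideanLin P x‖ ≤ a * ‖x‖) (hσ : ∀ j, |σ j| ≤ M)
    (hV : Vᵀ * V = 1) (hUt : Utᵀ * Ut = 1) (hVt : Vtᵀ * Vt = 1) (hσt : ∀ i, σt i ≠ 0)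
    (h : P * diagonal σ * Vᵀ = Ut * diagonal σt * Vtᵀ) (i : τ) :
    |σt i| ≤ a * M := by
  obtain ⟨w, hw, hσti⟩ := exists_norm_eq_abs_of_mul_diagonal_mul_transpose_eq hV hUt hVt hσt h i
  rw [← hσti, toLpLin_mul_same, LinearMap.comp_apply]
  calc _ ≤ a * ‖toEuclideanLin (diagonal σ) w‖ := hP _
    _ ≤ a * (M * ‖w‖) := by gcongr; exact norm_toEuclideanLin_diagonal_le hM hσ w
    _ = a * M := by rw [hw, mul_one]

theorem Matrix.mul_le_abs_of_mul_diagonal_mul_transpose_eq {b m : ℝ} (hb : 0 ≤ b) (hm : 0 ≤ m)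
    (hP : ∀ x, b * ‖x‖ ≤ ‖toEuclideanLin P x‖) (hσ : ∀ j, m ≤ |σ j|)
    (hV : Vᵀ * V = 1) (hUt : Utᵀ * Ut = 1) (hVt : Vtᵀ * Vt = 1) (hσt : ∀ i, σt i ≠ 0)
    (h : P * diagonal σ * Vᵀ = Ut * diagonal σt * Vtᵀ) (i : τ) :
    b * m ≤ |σt i| := by
  obtain ⟨w, hw, hσti⟩ := exists_norm_eq_abs_of_mul_diagonal_mul_transpose_eq hV hUt hVt hσt h i
  rw [← hσti, toLpLin_mul_same, LinearMap.comp_apply]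
  calc b * m = b * (m * ‖w‖) := by rw [hw, mul_one]
    _ ≤ b * ‖toEuclideanLin (diagonal σ) w‖ := by
      gcongr; exact le_norm_toEuclideanLin_diagonal hm hσ w
    _ ≤ _ := hP _

end SVD

section Balancing

variable {α ρ : Type*} [Fintype α] [DecidableEq α] [Fintype ρ] [DecidableEq ρ]

theorem Matrix.norm_toEuclideanLin_conj_add_one_sub_le {U : Matrix α ρ ℝ} (hU : Uᵀ * U = 1)
    {D : Matrix ρ ρ ℝ} {c : ℝ} (hc : 1 ≤ c) (hD : ∀ y, ‖toEuclideanLin D y‖ ≤ c * ‖y‖)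
    (x : EuclideanSpace ℝ α) :
    ‖toEuclideanLin (U * D * Uᵀ + (1 - U * Uᵀ)) x‖ ≤ c * ‖x‖ := by
  set y := toEuclideanLin Uᵀ x
  set z := x - toEuclideanLin U y
  have hz : toEuclideanLin Uᵀ z = 0 := by
    rw [map_sub, ← LinearMap.comp_apply, ← toLpLin_mul_same, hU, toLpLin_one,
      LinearMap.id_apply, sub_self]
  have pythagoras (v : EuclideanSpace ℝ ρ) :
      ‖toEuclideanLin U v + z‖ ^ 2 = ‖v‖ ^ 2 + ‖z‖ ^ 2 := by
    rw [norm_add_sq_real, inner_toEuclideanLin_left, hz, inner_zero_right,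
      norm_toEuclideanLin_of_transpose_mul_self hU]
    ring
  have hWx : toEuclideanLin (U * D * Uᵀ + (1 - U * Uᵀ)) x =
      toEuclideanLin U (toEuclideanLin D y) + z := by
    simp only [map_add, map_sub, toLpLin_mul_same, toLpLin_one, LinearMap.add_apply,
      LinearMap.sub_apply, LinearMap.comp_apply, LinearMap.id_apply, y, z]
  have hx : x = toEuclideanLin U y + z := by simp [z]
  refine (sq_le_sq₀ (norm_nonneg _) (by positivity)).mp ?_
  rw [hWx, pythagoras, mul_pow, hx, pythagoras]
  have hDy := pow_le_pow_left₀ (norm_nonneg _) (hD y) 2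
  have hz2 := mul_le_mul_of_nonneg_right (one_le_pow₀ (n := 2) hc) (sq_nonneg ‖z‖)
  rw [mul_pow] at hDy
  linarith

end Balancing

theorem Real.prod_rpow_one_div_le_of_forall_le {r : ℕ} (hr : r ≠ 0) {f : Fin r → ℝ} {M : ℝ}
    (hf : ∀ i, 0 ≤ f i) (hfM : ∀ i, f i ≤ M) : (∏ i, f i) ^ ((1 : ℝ) / r) ≤ M := by
  have hM : 0 ≤ M := (hf ⟨0, Nat.pos_of_ne_zero hr⟩).trans (hfM _)
  calc (∏ i, f i) ^ ((1 : ℝ) / r) ≤ (M ^ r) ^ ((1 : ℝ) / r) := by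
        gcongr
        · exact Finset.prod_nonneg fun i _ => hf i
        · simpa using Finset.prod_le_prod (s := Finset.univ) (fun i _ => hf i) (fun i _ => hfM i)
    _ = M := by rw [one_div, Real.pow_rpow_inv_natCast hM hr]

theorem div_le_one_add_div_one_sub_mul {g t s₁ s κ ε : ℝ} (hε0 : 0 ≤ ε) (hε : ε < 1)
    (hκ : 0 ≤ κ) (ht : 0 < t) (hg : g ≤ (1 + ε) * s₁) (hs : s₁ ≤ κ * s) (ht' : (1 - ε) * s ≤ t) :
    g / t ≤ (1 + ε) / (1 - ε) * κ := by
  have hε1 : 1 - ε ≠ 0 := (sub_pos.mpr hε).ne'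
  rw [div_le_iff₀ ht]
  calc g ≤ (1 + ε) * (κ * s) := hg.trans (by gcongr)
    _ = (1 + ε) / (1 - ε) * κ * ((1 - ε) * s) := by field_simp
    _ ≤ (1 + ε) / (1 - ε) * κ * t := by gcongr

theorem stmt12 (m n s r : ℕ) (hr : 0 < r)
    (ε κ₀ : ℝ) (hε0 : 0 < ε) (hε : ε < 1/4) (hκ : 1 ≤ κ₀)
    (A : Matrix (Fin m) (Fin n) ℝ)
    (U : Matrix (Fin m) (Fin r) ℝ) (V : Matrix (Fin n) (Fin r) ℝ) (σ : Fin r → ℝ)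
    (hV : Vᵀ * V = 1)
    (hσpos : ∀ i, 0 < σ i) (hσmono : ∀ i j : Fin r, i ≤ j → σ j ≤ σ i)
    (hSVD : A = U * Matrix.diagonal σ * Vᵀ)
    (hcond : σ ⟨0, hr⟩ ≤ κ₀ * σ ⟨r - 1, by omega⟩)
    (Φ : Matrix (Fin s) (Fin m) ℝ)
    (hemb : ∀ x : EuclideanSpace ℝ (Fin r),
      (1 - ε) * ‖x‖ ≤ ‖Matrix.toEuclideanLin (Φ * U) x‖ ∧
      ‖Matrix.toEuclideanLin (Φ * U) x‖ ≤ (1 + ε) * ‖x‖)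
    (B : Matrix (Fin s) (Fin n) ℝ) (hB : B = Φ * A)
    (Ut : Matrix (Fin s) (Fin r) ℝ) (Vt : Matrix (Fin n) (Fin r) ℝ) (σt : Fin r → ℝ)
    (hUt : Utᵀ * Ut = 1) (hVt : Vtᵀ * Vt = 1)
    (hσtpos : ∀ i, 0 < σt i) (hσtmono : ∀ i j : Fin r, i ≤ j → σt j ≤ σt i)
    (hBSVD : B = Ut * Matrix.diagonal σt * Vtᵀ)
    (gt : ℝ) (hg : gt = (∏ i, σt i) ^ ((1 : ℝ) / r))
    (W : Matrix (Fin s) (Fin s) ℝ)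
    (hW : W = Ut * Matrix.diagonal (fun i => gt / σt i) * Utᵀ + (1 - Ut * Utᵀ)) :
    specNorm W ≤ ((1 + ε) / (1 - ε)) * κ₀ := by
  set first : Fin r := ⟨0, hr⟩
  set last : Fin r := ⟨r - 1, by omega⟩
  have first_le (i : Fin r) : first ≤ i := Fin.le_def.mpr (Nat.zero_le _)
  have le_last (i : Fin r) : i ≤ last := Fin.le_def.mpr (by simp only [last]; omega)
  have hsvd : Φ * U * diagonal σ * Vᵀ = Ut * diagonal σt * Vtᵀ := by
    rw [← hBSVD, hB, hSVD]; simp only [Matrix.mul_assoc]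
  have hσt_first : σt first ≤ (1 + ε) * σ first := by
    simpa [abs_of_pos (hσtpos first)] using abs_le_of_mul_diagonal_mul_transpose_eq
      (by linarith) (hσpos first).le (fun x => (hemb x).2)
      (fun j => (abs_of_pos (hσpos j)).trans_le (hσmono first j (first_le j)))
      hV hUt hVt (fun i => (hσtpos i).ne') hsvd first
  have hσt_last : (1 - ε) * σ last ≤ σt last := by
    simpa [abs_of_pos (hσtpos last)] using mul_le_abs_of_mul_diagonal_mul_transpose_eq
      (by linarith) (hσpos last).le (fun x => (hemb x).1)
      (fun j => (hσmono j last (le_last j)).trans_eq (abs_of_pos (hσpos j)).symm)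
      hV hUt hVt (fun i => (hσtpos i).ne') hsvd last
  have hgt : gt ≤ σt first := hg ▸ Real.prod_rpow_one_div_le_of_forall_le hr.ne'
    (fun i => (hσtpos i).le) (fun i => hσtmono first i (first_le i))
  have hratio (i : Fin r) : |gt / σt i| ≤ (1 + ε) / (1 - ε) * κ₀ := by
    have hgt_pos : 0 < gt := hg ▸ Real.rpow_pos_of_pos (Finset.prod_pos fun i _ => hσtpos i) _
    rw [abs_of_pos (div_pos hgt_pos (hσtpos i))]
    exact div_le_one_add_div_one_sub_mul hε0.le (by linarith) (by linarith) (hσtpos i)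
      (hgt.trans hσt_first) hcond (hσt_last.trans (hσtmono i last (le_last i)))
  have hc : 1 ≤ (1 + ε) / (1 - ε) * κ₀ :=
    one_le_mul_of_one_le_of_one_le ((one_le_div (by linarith)).mpr (by linarith)) hκ
  refine ContinuousLinearMap.opNorm_le_bound _ (by linarith) fun x => ?_
  rw [LinearMap.coe_toContinuousLinearMap', hW]
  exact norm_toEuclideanLin_conj_add_one_sub_le hUt hc
    (norm_toEuclideanLin_diagonal_le (by linarith) hratio) x
end
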